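/- arXiv:2304.04827 — 3 statements merged into one kernel-verified Lean document; each statement's English description precedes it below -/
import Mathlib

section
/- If σ : G_K → G_S is a surjective full scale-measure from context K to context S, then the map A ↦ σ⁻¹(A) is an order isomorphism between (Ext(S), ⊆) and (Ext(K), ⊆). -/
def extentOf {G M : Type*} (I : G → M → Prop) (B : Set M) : Set G :=
  {g | ∀ m ∈ B, I g m}

def IsExtent {G M : Type*} (I : G → M → Prop) (X : Set G) : Prop :=
  ∃ B : Set M, X = extentOf I B

def IsScaleMeasure {GK MK GS MS : Type*} (IK : GK → MK → Prop)
    (IS : GS → MS → Prop) (σ : GK → GS) : Prop :=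
  ∀ A : Set GS, IsExtent IS A → IsExtent IK (σ ⁻¹' A)

/-- `σ` is a full scale-measure: additionally every extent of `K` is the
preimage of an extent of `S`. -/
def IsFullScaleMeasure {GK MK GS MS : Type*} (IK : GK → MK → Prop)
    (IS : GS → MS → Prop) (σ : GK → GS) : Prop :=
  IsScaleMeasure IK IS σ ∧
    ∀ X : Set GK, IsExtent IK X → ∃ A : Set GS, IsExtent IS A ∧ σ ⁻¹' A = X

open Function

section
variable {GK MK GS MS : Type*} {IK : GK → MK → Prop} {IS : GS → MS → Prop} {σ : GK → GS}

def IsScaleMeasure.preimageExtents (hσ : IsScaleMeasure IK IS σ) (hsurj : Surjective σ) :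
    {A : Set GS // IsExtent IS A} ↪o {X : Set GK // IsExtent IK X} :=
  OrderEmbedding.ofMapLEIff (fun A => ⟨σ ⁻¹' A, hσ A A.2⟩) fun _ _ =>
    hsurj.preimage_subset_preimage_iff

theorem IsFullScaleMeasure.surjective_preimageExtents (hσ : IsFullScaleMeasure IK IS σ)
    (hsurj : Surjective σ) : Surjective (hσ.1.preimageExtents hsurj) := by
  rintro ⟨X, hX⟩
  obtain ⟨A, hA, rfl⟩ := hσ.2 X hX
  exact ⟨⟨A, hA⟩, rfl⟩

end

/-- For a surjective full scale-measure `σ`, the preimage map `A ↦ σ⁻¹(A)` is an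
order isomorphism between `(Ext(S), ⊆)` and `(Ext(K), ⊆)`. -/
theorem fullScaleMeasure_orderIso {GK MK GS MS : Type*}
    (IK : GK → MK → Prop) (IS : GS → MS → Prop) (σ : GK → GS)
    (hsurj : Function.Surjective σ) (hfull : IsFullScaleMeasure IK IS σ) :
    ∃ e : {A : Set GS // IsExtent IS A} ≃o {X : Set GK // IsExtent IK X},
      ∀ A : {A : Set GS // IsExtent IS A}, (e A : Set GK) = σ ⁻¹' (A : Set GS) :=
  ⟨.ofSurjective _ (hfull.surjective_preimageExtents hsurj), fun _ => rfl⟩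
end

section
/- Let σ be a surjective full scale-measure from formal context K = (G_K, M_K, I_K) to scale S. Then for any H ⊆ G_K, the restriction σ|_H is a surjective full scale-measure from the induced subcontext K[H, M_K] to the induced subcontext S[σ(H), M_S]. -/
/-- Extents of the induced subcontext on the object set `H` (full attribute set). -/
def IsExtentSub {G M : Type*} (I : G → M → Prop) (H : Set G) (X : Set G) : Prop :=
  ∃ B : Set M, X = {g | g ∈ H ∧ ∀ m ∈ B, I g m}

/-!
Extents of an induced subcontext `K[H, M]` are exactly the traces `H ∩ Y` of extents `Y` of `K`.
Since `σ` maps `H` into `σ(H)`, cutting an extent of `S` down to `σ(H)` does not change its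
preimage inside `H`, so the restriction inherits both the scale-measure and the fullness property.
-/

open Set

theorem isExtentSub_iff {G M : Type*} {I : G → M → Prop} {H X : Set G} :
    IsExtentSub I H X ↔ ∃ Y, IsExtent I Y ∧ X = H ∩ Y := by
  constructor
  · rintro ⟨B, rfl⟩
    exact ⟨extentOf I B, ⟨B, rfl⟩, rfl⟩
  · rintro ⟨_, ⟨B, rfl⟩, rfl⟩
    exact ⟨B, rfl⟩

theorem Set.MapsTo.inter_preimage_inter {α β : Type*} {f : α → β} {s : Set α} {t : Set β}
    (h : MapsTo f s t) (u : Set β) : s ∩ f ⁻¹' (t ∩ u) = s ∩ f ⁻¹' u := by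
  rw [preimage_inter, ← inter_assoc, inter_eq_left.2 h.subset_preimage]

section Restriction

variable {GK MK GS MS : Type*} {IK : GK → MK → Prop} {IS : GS → MS → Prop} {σ : GK → GS}
  {H : Set GK} {T : Set GS}

theorem IsScaleMeasure.isExtentSub_inter_preimage (hσ : IsScaleMeasure IK IS σ)
    (hHT : MapsTo σ H T) {C : Set GS} (hC : IsExtentSub IS T C) :
    IsExtentSub IK H (H ∩ σ ⁻¹' C) := by
  obtain ⟨A, hA, rfl⟩ := isExtentSub_iff.1 hC
  rw [hHT.inter_preimage_inter]
  exact isExtentSub_iff.2 ⟨_, hσ A hA, rfl⟩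

theorem IsFullScaleMeasure.exists_isExtentSub_inter_preimage_eq
    (hσ : IsFullScaleMeasure IK IS σ) (hHT : MapsTo σ H T) {D : Set GK}
    (hD : IsExtentSub IK H D) : ∃ C, IsExtentSub IS T C ∧ H ∩ σ ⁻¹' C = D := by
  obtain ⟨X, hX, rfl⟩ := isExtentSub_iff.1 hD
  obtain ⟨A, hA, rfl⟩ := hσ.2 X hX
  exact ⟨T ∩ A, isExtentSub_iff.2 ⟨A, hA, rfl⟩, hHT.inter_preimage_inter A⟩

end Restriction

theorem heredity_full_scaleMeasure_general {GK MK GS MS : Type*}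
    (IK : GK → MK → Prop) (IS : GS → MS → Prop) (σ : GK → GS)
    (hfull : IsFullScaleMeasure IK IS σ)
    (H : Set GK) :
    -- `σ|_H : H → σ(H)` is surjective
    (∀ y ∈ σ '' H, ∃ g ∈ H, σ g = y) ∧
    -- `σ|_H` is a scale-measure from `K[H, M_K]` to `S[σ(H), M_S]`
    (∀ C : Set GS, IsExtentSub IS (σ '' H) C →
      IsExtentSub IK H (H ∩ σ ⁻¹' C)) ∧
    -- `σ|_H` is full
    (∀ D : Set GK, IsExtentSub IK H D →
      ∃ C : Set GS, IsExtentSub IS (σ '' H) C ∧ H ∩ σ ⁻¹' C = D) :=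
  ⟨fun _ hy => hy,
    fun _ => hfull.1.isExtentSub_inter_preimage (mapsTo_image σ H),
    fun _ => hfull.exists_isExtentSub_inter_preimage_eq (mapsTo_image σ H)⟩

/-- Heredity of full scale-measures: if `σ` is a surjective full scale-measure
from `K` to `S`, then for every `H ⊆ G_K` the restriction `σ|_H` is a surjective
full scale-measure from the induced subcontext `K[H, M_K]` to `S[σ(H), M_S]`. -/
theorem heredity_full_scaleMeasure {GK MK GS MS : Type*}
    (IK : GK → MK → Prop) (IS : GS → MS → Prop) (σ : GK → GS)
    (hsurj : Function.Surjective σ) (hfull : IsFullScaleMeasure IK IS σ)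
    (H : Set GK) :
    -- `σ|_H : H → σ(H)` is surjective
    (∀ y ∈ σ '' H, ∃ g ∈ H, σ g = y) ∧
    -- `σ|_H` is a scale-measure from `K[H, M_K]` to `S[σ(H), M_S]`
    (∀ C : Set GS, IsExtentSub IS (σ '' H) C →
      IsExtentSub IK H (H ∩ σ ⁻¹' C)) ∧
    -- `σ|_H` is full
    (∀ D : Set GK, IsExtentSub IK H D →
      ∃ C : Set GS, IsExtentSub IS (σ '' H) C ∧ H ∩ σ ⁻¹' C = D) :=
  heredity_full_scaleMeasure_general IK IS σ hfull H
end

section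
/- For n ≥ 3, the crown scale C_n = ([n], [n], J), where (a,b) ∈ J iff a = b or b = a + 1 or (a,b) = (n,1), has as extents exactly: the empty set, all singletons {k}, all incidence pairs {a, a+1} (indices mod n), and [n]. Hence C_n has 2n + 2 extents. -/
/-- The crown incidence on `Fin n`: each element is related to itself and its
cyclic successor (`a + 1` in `Fin n` wraps around, covering `(n, 1)`). -/
def crownRel (n : ℕ) [NeZero n] (a b : Fin n) : Prop :=
  a = b ∨ b = a + 1

/-!
The objects incident to an attribute `m` form its column `{m - 1, m}`, and an extent is an
intersection of columns. So the extent of a nonempty attribute set lies in a two-element column,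
which leaves only `∅`, singletons, the pairs `{a, a + 1}`, and `[n]` as the extent of `∅`. All of
them occur: `{a, a + 1}` is the column of `a + 1`, `{k}` is the intersection of the columns of `k`
and `k + 1`, and `∅` is the extent of `[n]`, because no object `g` is incident to `g + 2` when
`n ≥ 3`. For `n ≥ 3` these `2n + 2` sets are pairwise distinct, the four kinds being told apart
by their cardinalities `0, 1, 2, n`.
-/

section Extent

variable {G M : Type*} (I : G → M → Prop)

lemma extentOf_empty : extentOf I ∅ = Set.univ := by
  ext; simp [extentOf]

lemma extentOf_singleton (m : M) : extentOf I {m} = {g | I g m} := by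
  ext; simp [extentOf]

lemma extentOf_insert (m : M) (B : Set M) :
    extentOf I (insert m B) = {g | I g m} ∩ extentOf I B := by
  ext; simp [extentOf]

lemma extentOf_subset_of_mem {B : Set M} {m : M} (hm : m ∈ B) :
    extentOf I B ⊆ {g | I g m} :=
  fun _ hg => hg m hm

end Extent

section Crown

open Fin.CommRing

lemma Fin.natCast_ne_zero_of_pos_of_lt {n k : ℕ} [NeZero n] (hk : 0 < k) (hkn : k < n) :
    (k : Fin n) ≠ 0 := by
  rw [Ne, Fin.natCast_eq_zero]
  exact Nat.not_dvd_of_pos_of_lt hk hkn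

lemma Fin.one_ne_zero_of_two_le {n : ℕ} [NeZero n] (hn : 2 ≤ n) : (1 : Fin n) ≠ 0 := by
  simpa using Fin.natCast_ne_zero_of_pos_of_lt (n := n) (k := 1) Nat.one_pos hn

lemma Fin.two_ne_zero_of_three_le {n : ℕ} [NeZero n] (hn : 3 ≤ n) : (2 : Fin n) ≠ 0 := by
  simpa using Fin.natCast_ne_zero_of_pos_of_lt (n := n) (k := 2) Nat.two_pos hn

variable {n : ℕ} [NeZero n]

lemma setOf_crownRel (m : Fin n) : {g | crownRel n g m} = {m - 1, m} := by
  ext g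
  simp [crownRel, eq_sub_iff_add_eq, eq_comm, or_comm]

lemma crown_extentOf_univ (hn : 3 ≤ n) : extentOf (crownRel n) Set.univ = ∅ := by
  refine Set.eq_empty_of_forall_notMem fun g hg => ?_
  have hcol := extentOf_subset_of_mem (crownRel n) (Set.mem_univ (g + 2)) hg
  rw [setOf_crownRel, show g + 2 - 1 = g + 1 by ring] at hcol
  rcases hcol with h | h
  · exact Fin.one_ne_zero_of_two_le (Nat.le_of_succ_le hn) (left_eq_add.mp h)
  · exact Fin.two_ne_zero_of_three_le hn (left_eq_add.mp h)

lemma crown_extentOf_pair (hn : 3 ≤ n) (k : Fin n) :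
    extentOf (crownRel n) {k, k + 1} = {k} := by
  have hk : k - 1 ∉ ({k, k + 1} : Set (Fin n)) := by
    rw [Set.mem_insert_iff, Set.mem_singleton_iff]
    rintro (h | h)
    · exact Fin.one_ne_zero_of_two_le (Nat.le_of_succ_le hn) (by linear_combination -h)
    · exact Fin.two_ne_zero_of_three_le hn (by linear_combination -h)
  rw [extentOf_insert, extentOf_singleton, setOf_crownRel, setOf_crownRel,
    add_sub_cancel_right, Set.pair_comm, Set.insert_inter_of_mem (Set.mem_insert k _),
    Set.singleton_inter_eq_empty.mpr hk, ← Set.singleton_def]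

lemma crown_extentOf_singleton (a : Fin n) :
    extentOf (crownRel n) {a + 1} = {a, a + 1} := by
  rw [extentOf_singleton, setOf_crownRel, add_sub_cancel_right]

lemma isExtent_crownRel_iff (hn : 3 ≤ n) (X : Set (Fin n)) :
    IsExtent (crownRel n) X ↔
      X = ∅ ∨ (∃ k : Fin n, X = {k}) ∨ (∃ a : Fin n, X = {a, a + 1}) ∨ X = Set.univ := by
  constructor
  · rintro ⟨B, rfl⟩
    rcases B.eq_empty_or_nonempty with rfl | ⟨m, hm⟩
    · exact Or.inr (Or.inr (Or.inr (extentOf_empty _)))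
    · have hcol := extentOf_subset_of_mem (crownRel n) hm
      rw [setOf_crownRel, Set.subset_pair_iff_eq] at hcol
      rcases hcol with h | h | h | h
      · exact Or.inl h
      · exact Or.inr (Or.inl ⟨_, h⟩)
      · exact Or.inr (Or.inl ⟨_, h⟩)
      · exact Or.inr (Or.inr (Or.inl ⟨m - 1, by rwa [sub_add_cancel]⟩))
  · rintro (rfl | ⟨k, rfl⟩ | ⟨a, rfl⟩ | rfl)
    · exact ⟨_, (crown_extentOf_univ hn).symm⟩
    · exact ⟨_, (crown_extentOf_pair hn k).symm⟩
    · exact ⟨_, (crown_extentOf_singleton a).symm⟩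
    · exact ⟨_, (extentOf_empty _).symm⟩

lemma crown_pair_injective (hn : 3 ≤ n) :
    Function.Injective fun a : Fin n => ({a, a + 1} : Set (Fin n)) := by
  intro a b (hab : ({a, a + 1} : Set (Fin n)) = {b, b + 1})
  have ha : a ∈ ({b, b + 1} : Set (Fin n)) := hab ▸ Set.mem_insert a _
  have hb : b ∈ ({a, a + 1} : Set (Fin n)) := hab.symm ▸ Set.mem_insert b _
  rw [Set.mem_insert_iff, Set.mem_singleton_iff] at ha hb
  rcases ha with ha | rfl
  · exact ha
  · rcases hb with hb | hb
    · exact hb.symm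
    · exact (Fin.two_ne_zero_of_three_le hn (by linear_combination -hb)).elim

lemma ncard_crown_pair (hn : 2 ≤ n) (a : Fin n) : ({a, a + 1} : Set (Fin n)).ncard = 2 :=
  Set.ncard_pair (left_eq_add.not.mpr (Fin.one_ne_zero_of_two_le hn))

lemma setOf_isExtent_crownRel (hn : 3 ≤ n) :
    {X : Set (Fin n) | IsExtent (crownRel n) X} =
      insert ∅ (insert Set.univ
        (Set.range (fun k : Fin n => ({k} : Set (Fin n))) ∪
          Set.range fun a : Fin n => ({a, a + 1} : Set (Fin n)))) := by
  ext X
  simp only [Set.mem_ofPred_eq, isExtent_crownRel_iff hn, Set.mem_insert_iff, Set.mem_union,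
    Set.mem_range]
  grind

lemma ncard_setOf_isExtent_crownRel (hn : 3 ≤ n) :
    {X : Set (Fin n) | IsExtent (crownRel n) X}.ncard = 2 * n + 2 := by
  rw [setOf_isExtent_crownRel hn]
  set singletons := Set.range fun k : Fin n => ({k} : Set (Fin n))
  set pairs := Set.range fun a : Fin n => ({a, a + 1} : Set (Fin n))
  have hdisj : Disjoint singletons pairs := by
    refine Set.disjoint_left.mpr ?_
    rintro _ ⟨k, rfl⟩ ⟨a, h⟩
    have := ncard_crown_pair (Nat.le_of_succ_le hn) a
    simp_all
  have huniv : Set.univ ∉ singletons ∪ pairs := by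
    rintro (⟨k, h⟩ | ⟨a, h⟩)
    · have := Set.ncard_singleton k
      simp_all
    · have := ncard_crown_pair (Nat.le_of_succ_le hn) a
      simp_all
  have hempty : ∅ ∉ insert Set.univ (singletons ∪ pairs) := by
    rintro (h | ⟨k, h⟩ | ⟨a, h⟩)
    · exact Set.empty_ne_univ h
    · exact Set.singleton_ne_empty k h
    · exact (Set.insert_nonempty a _).ne_empty h
  rw [Set.ncard_insert_of_notMem hempty, Set.ncard_insert_of_notMem huniv,
    Set.ncard_union_eq hdisj, Set.ncard_range_of_injective Set.singleton_injective,
    Set.ncard_range_of_injective (crown_pair_injective hn), Nat.card_fin]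
  ring

end Crown

/-- For `n ≥ 3`, the crown scale `C_n` has as extents exactly the empty set,
the singletons, the pairs `{a, a+1}` (cyclically), and `[n]`; hence it has
`2n + 2` extents. -/
theorem crown_scale_extents (n : ℕ) [NeZero n] (hn : 3 ≤ n) :
    (∀ X : Set (Fin n), IsExtent (crownRel n) X ↔
      X = ∅ ∨ (∃ k : Fin n, X = {k}) ∨ (∃ a : Fin n, X = {a, a + 1}) ∨
        X = Set.univ) ∧
    {X : Set (Fin n) | IsExtent (crownRel n) X}.ncard = 2 * n + 2 :=
  ⟨isExtent_crownRel_iff hn, ncard_setOf_isExtent_crownRel hn⟩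
end
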